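/- arXiv:2112.01355 — 7 statements merged into one kernel-verified Lean document; each statement's English description precedes it below -/
import Mathlib

section
/- For all r ∈ (r_e, r_c) one has h(r) < 0, where h(r) := 2μ(r)·(d/dr)(r·μ'(r) − 4μ(r)) − μ'(r)·(r·μ'(r) − 4μ(r)). -/
/-!
Vieta's formulas for the four roots give `μ = -(Λ/3) ∏ (r - rᵢ)` with `∑ rᵢ = 0`, and the linear
coefficient `-2m` shows that the third elementary symmetric function of the roots is negative,
which forces `r_e > 0`. For `r ∈ (r_e, r_c)` put `zᵢ = r - rᵢ > 0` for the three smaller roots,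
`pᵢ` for their elementary symmetric functions and `y = r_c - r > 0`. Then `h(r)` is
`-(Λ²/36)` times a cubic in `y`,
  `p₁p₃² + y p₃ (2p₁p₂ - 9p₃) + y² (p₁p₂² + 6p₂p₃ - 4p₁²p₃) - y³ D`,  `D = p₂² - 4p₁p₃`,
whose first three coefficients are nonnegative for positive `zᵢ`. If `D ≤ 0` the cubic is
therefore positive; if `D > 0`, the constraint `y < p₁` (that is, `r > 0`) absorbs the `y³` term.
-/

lemma cubic_coeffs_eq_zero_of_four_roots {c₃ c₂ c₁ c₀ x₁ x₂ x₃ x₄ : ℝ}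
    (h₁₂ : x₁ ≠ x₂) (h₁₃ : x₁ ≠ x₃) (h₁₄ : x₁ ≠ x₄) (h₂₃ : x₂ ≠ x₃) (h₂₄ : x₂ ≠ x₄) (h₃₄ : x₃ ≠ x₄)
    (e₁ : c₃ * x₁ ^ 3 + c₂ * x₁ ^ 2 + c₁ * x₁ + c₀ = 0)
    (e₂ : c₃ * x₂ ^ 3 + c₂ * x₂ ^ 2 + c₁ * x₂ + c₀ = 0)
    (e₃ : c₃ * x₃ ^ 3 + c₂ * x₃ ^ 2 + c₁ * x₃ + c₀ = 0)
    (e₄ : c₃ * x₄ ^ 3 + c₂ * x₄ ^ 2 + c₁ * x₄ + c₀ = 0) :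
    c₃ = 0 ∧ c₂ = 0 ∧ c₁ = 0 ∧ c₀ = 0 := by
  -- divided differences of the cubic at the four nodes
  have d₁₂ : c₃ * (x₁ ^ 2 + x₁ * x₂ + x₂ ^ 2) + c₂ * (x₁ + x₂) + c₁ = 0 :=
    mul_left_cancel₀ (sub_ne_zero.2 h₁₂) (by linear_combination e₁ - e₂)
  have d₁₃ : c₃ * (x₁ ^ 2 + x₁ * x₃ + x₃ ^ 2) + c₂ * (x₁ + x₃) + c₁ = 0 :=
    mul_left_cancel₀ (sub_ne_zero.2 h₁₃) (by linear_combination e₁ - e₃)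
  have d₁₄ : c₃ * (x₁ ^ 2 + x₁ * x₄ + x₄ ^ 2) + c₂ * (x₁ + x₄) + c₁ = 0 :=
    mul_left_cancel₀ (sub_ne_zero.2 h₁₄) (by linear_combination e₁ - e₄)
  have d₁₂₃ : c₃ * (x₁ + x₂ + x₃) + c₂ = 0 :=
    mul_left_cancel₀ (sub_ne_zero.2 h₂₃) (by linear_combination d₁₂ - d₁₃)
  have d₁₂₄ : c₃ * (x₁ + x₂ + x₄) + c₂ = 0 :=
    mul_left_cancel₀ (sub_ne_zero.2 h₂₄) (by linear_combination d₁₂ - d₁₄)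
  have hc₃ : c₃ = 0 := mul_left_cancel₀ (sub_ne_zero.2 h₃₄) (by linear_combination d₁₂₃ - d₁₂₄)
  have hc₂ : c₂ = 0 := by linear_combination d₁₂₃ - (x₁ + x₂ + x₃) * hc₃
  have hc₁ : c₁ = 0 := by
    linear_combination d₁₂ - (x₁ ^ 2 + x₁ * x₂ + x₂ ^ 2) * hc₃ - (x₁ + x₂) * hc₂
  exact ⟨hc₃, hc₂, hc₁, by linear_combination e₁ - x₁ ^ 3 * hc₃ - x₁ ^ 2 * hc₂ - x₁ * hc₁⟩

lemma quartic_coeffs_of_four_roots {a b c d e x₁ x₂ x₃ x₄ : ℝ}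
    (h₁₂ : x₁ ≠ x₂) (h₁₃ : x₁ ≠ x₃) (h₁₄ : x₁ ≠ x₄) (h₂₃ : x₂ ≠ x₃) (h₂₄ : x₂ ≠ x₄) (h₃₄ : x₃ ≠ x₄)
    (e₁ : a * x₁ ^ 4 + b * x₁ ^ 3 + c * x₁ ^ 2 + d * x₁ + e = 0)
    (e₂ : a * x₂ ^ 4 + b * x₂ ^ 3 + c * x₂ ^ 2 + d * x₂ + e = 0)
    (e₃ : a * x₃ ^ 4 + b * x₃ ^ 3 + c * x₃ ^ 2 + d * x₃ + e = 0)
    (e₄ : a * x₄ ^ 4 + b * x₄ ^ 3 + c * x₄ ^ 2 + d * x₄ + e = 0) :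
    b = -a * (x₁ + x₂ + x₃ + x₄) ∧
    c = a * (x₁ * x₂ + x₁ * x₃ + x₁ * x₄ + x₂ * x₃ + x₂ * x₄ + x₃ * x₄) ∧
    d = -a * (x₁ * x₂ * x₃ + x₁ * x₂ * x₄ + x₁ * x₃ * x₄ + x₂ * x₃ * x₄) ∧
    e = a * (x₁ * x₂ * x₃ * x₄) := by
  -- the quartic minus `a * ∏ (X - xᵢ)` is a cubic vanishing at the four roots
  obtain ⟨hb, hc, hd, he⟩ := cubic_coeffs_eq_zero_of_four_roots
    (c₃ := b + a * (x₁ + x₂ + x₃ + x₄))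
    (c₂ := c - a * (x₁ * x₂ + x₁ * x₃ + x₁ * x₄ + x₂ * x₃ + x₂ * x₄ + x₃ * x₄))
    (c₁ := d + a * (x₁ * x₂ * x₃ + x₁ * x₂ * x₄ + x₁ * x₃ * x₄ + x₂ * x₃ * x₄))
    (c₀ := e - a * (x₁ * x₂ * x₃ * x₄)) h₁₂ h₁₃ h₁₄ h₂₃ h₂₄ h₃₄
    (by linear_combination e₁) (by linear_combination e₂)
    (by linear_combination e₃) (by linear_combination e₄)
  exact ⟨by linear_combination hb, by linear_combination hc, by linear_combination hd,
    by linear_combination he⟩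

lemma esymm3_nonneg_of_sum_eq_zero {x y z w : ℝ} (hsum : x + y + z + w = 0)
    (hx : x ≤ 0) (hy : y ≤ 0) (hz : z ≤ 0) :
    0 ≤ x * y * z + x * y * w + x * z * w + y * z * w := by
  obtain rfl : w = -(x + y + z) := by linarith
  have key : x * y * z + x * y * -(x + y + z) + x * z * -(x + y + z) + y * z * -(x + y + z)
      = -((x + y) * (x + z) * (y + z)) := by ring
  rw [key, neg_nonneg]
  exact mul_nonpos_of_nonneg_of_nonpos
    (mul_nonneg_of_nonpos_of_nonpos (by linarith) (by linarith)) (by linarith)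

lemma deriv_eq_of_depressed_quartic {f : ℝ → ℝ} {k B C D : ℝ}
    (hf : ∀ s, f s = -k * s ^ 4 + B * s ^ 2 + C * s + D) :
    deriv f = fun s => -4 * k * s ^ 3 + 2 * B * s + C := by
  ext s
  have hd : HasDerivAt (fun s => -k * s ^ 4 + B * s ^ 2 + C * s + D)
      (-k * (4 * s ^ 3) + B * (2 * s) + C) s := by
    simpa using ((((hasDerivAt_pow 4 s).const_mul (-k)).add
      ((hasDerivAt_pow 2 s).const_mul B)).add ((hasDerivAt_id s).const_mul C)).add_const D
  rw [funext hf, hd.deriv]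
  ring

lemma h_eq_of_depressed_quartic {f : ℝ → ℝ} {k B C D : ℝ}
    (hf : ∀ s, f s = -k * s ^ 4 + B * s ^ 2 + C * s + D) (r : ℝ) :
    2 * f r * deriv (fun s => s * deriv f s - 4 * f s) r - deriv f r * (r * deriv f r - 4 * f r)
      = 2 * (-k * r ^ 4 + B * r ^ 2 + C * r + D) * (-4 * B * r - 3 * C)
        - (-4 * k * r ^ 3 + 2 * B * r + C) * (-2 * B * r ^ 2 - 3 * C * r - 4 * D) := by
  have hg : ∀ s, s * deriv f s - 4 * f s
      = -0 * s ^ 4 + (-2 * B) * s ^ 2 + (-3 * C) * s + (-4 * D) := by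
    intro s
    rw [deriv_eq_of_depressed_quartic hf, hf]
    ring
  rw [deriv_eq_of_depressed_quartic (f := fun s => s * deriv f s - 4 * f s) hg,
    deriv_eq_of_depressed_quartic hf, hf]
  ring

def normalizedH (p₁ p₂ p₃ y : ℝ) : ℝ :=
  p₁ * p₃ ^ 2 + y * p₃ * (2 * p₁ * p₂ - 9 * p₃)
    + y ^ 2 * (p₁ * p₂ ^ 2 + 6 * p₂ * p₃ - 4 * p₁ ^ 2 * p₃) - y ^ 3 * (p₂ ^ 2 - 4 * p₁ * p₃)

lemma h_eq_of_roots {f : ℝ → ℝ} {k x₁ x₂ x₃ x₄ : ℝ} (hsum : x₁ + x₂ + x₃ + x₄ = 0)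
    (hf : ∀ s, f s = -k * ((s - x₁) * (s - x₂) * (s - x₃) * (s - x₄))) (r : ℝ) :
    2 * f r * deriv (fun s => s * deriv f s - 4 * f s) r - deriv f r * (r * deriv f r - 4 * f r)
      = -(k ^ 2 / 4) * normalizedH ((r - x₁) + (r - x₂) + (r - x₃))
          ((r - x₁) * (r - x₂) + (r - x₁) * (r - x₃) + (r - x₂) * (r - x₃))
          ((r - x₁) * (r - x₂) * (r - x₃)) (x₄ - r) := by
  obtain rfl : x₄ = -(x₁ + x₂ + x₃) := by linarith
  rw [h_eq_of_depressed_quartic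
    (B := -k * (x₁ * x₂ + x₁ * x₃ + x₂ * x₃ - (x₁ + x₂ + x₃) ^ 2))
    (C := k * (x₁ * x₂ * x₃ - (x₁ + x₂ + x₃) * (x₁ * x₂ + x₁ * x₃ + x₂ * x₃)))
    (D := k * (x₁ * x₂ * x₃ * (x₁ + x₂ + x₃))) (fun s => by rw [hf]; ring), normalizedH]
  ring

lemma normalizedH_pos {p₁ p₂ p₃ y : ℝ} (hp₃ : 0 < p₃) (hp₁₂ : 9 * p₃ ≤ p₁ * p₂)
    (hq : 0 ≤ p₁ * p₂ ^ 2 + 6 * p₂ * p₃ - 4 * p₁ ^ 2 * p₃) (hy : 0 < y) (hyp : y < p₁) :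
    0 < normalizedH p₁ p₂ p₃ y := by
  have hp₁ : 0 < p₁ := hy.trans hyp
  have hp₂ : 0 < p₂ := pos_of_mul_pos_right (by linarith) hp₁.le
  have hlin : 0 ≤ y * p₃ * (2 * p₁ * p₂ - 9 * p₃) := by
    have : 0 ≤ 2 * p₁ * p₂ - 9 * p₃ := by linarith
    positivity
  rcases le_or_gt (p₂ ^ 2 - 4 * p₁ * p₃) 0 with hD | hD
  · have : 0 ≤ -(y ^ 3 * (p₂ ^ 2 - 4 * p₁ * p₃)) :=
      neg_nonneg.2 (mul_nonpos_of_nonneg_of_nonpos (by positivity) hD)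
    unfold normalizedH
    linarith [mul_nonneg (sq_nonneg y) hq, mul_pos hp₁ (pow_pos hp₃ 2)]
  · -- the `y²` coefficient is `p₁ D + 6 p₂ p₃`, and `-y³ D = (p₁ - y) y² D - p₁ y² D`
    have key : normalizedH p₁ p₂ p₃ y = (p₁ - y) * y ^ 2 * (p₂ ^ 2 - 4 * p₁ * p₃)
        + p₁ * p₃ ^ 2 + y * p₃ * (2 * p₁ * p₂ - 9 * p₃) + 6 * y ^ 2 * p₂ * p₃ := by
      unfold normalizedH; ring
    have : 0 < (p₁ - y) * y ^ 2 * (p₂ ^ 2 - 4 * p₁ * p₃) :=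
      mul_pos (mul_pos (by linarith) (by positivity)) hD
    rw [key]
    linarith [mul_pos hp₁ (pow_pos hp₃ 2), mul_pos (mul_pos (pow_pos hy 2) hp₂) hp₃]

lemma nine_mul_prod_le_sum_mul_esymm2 {x₁ x₂ x₃ : ℝ} (h₁ : 0 ≤ x₁) (h₂ : 0 ≤ x₂) (h₃ : 0 ≤ x₃) :
    9 * (x₁ * x₂ * x₃) ≤ (x₁ + x₂ + x₃) * (x₁ * x₂ + x₁ * x₃ + x₂ * x₃) := by
  have key : (x₁ + x₂ + x₃) * (x₁ * x₂ + x₁ * x₃ + x₂ * x₃) - 9 * (x₁ * x₂ * x₃)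
      = x₁ * (x₂ - x₃) ^ 2 + x₂ * (x₁ - x₃) ^ 2 + x₃ * (x₁ - x₂) ^ 2 := by ring
  have : 0 ≤ x₁ * (x₂ - x₃) ^ 2 + x₂ * (x₁ - x₃) ^ 2 + x₃ * (x₁ - x₂) ^ 2 := by positivity
  linarith

lemma esymm_quintic_nonneg {x₁ x₂ x₃ : ℝ} (h₁ : 0 ≤ x₁) (h₂ : 0 ≤ x₂) (h₃ : 0 ≤ x₃) :
    0 ≤ (x₁ + x₂ + x₃) * (x₁ * x₂ + x₁ * x₃ + x₂ * x₃) ^ 2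
      + 6 * (x₁ * x₂ + x₁ * x₃ + x₂ * x₃) * (x₁ * x₂ * x₃)
      - 4 * (x₁ + x₂ + x₃) ^ 2 * (x₁ * x₂ * x₃) := by
  have key : (x₁ + x₂ + x₃) * (x₁ * x₂ + x₁ * x₃ + x₂ * x₃) ^ 2
      + 6 * (x₁ * x₂ + x₁ * x₃ + x₂ * x₃) * (x₁ * x₂ * x₃)
      - 4 * (x₁ + x₂ + x₃) ^ 2 * (x₁ * x₂ * x₃)
      = x₁ ^ 3 * (x₂ - x₃) ^ 2 + x₂ ^ 3 * (x₁ - x₃) ^ 2 + x₃ ^ 3 * (x₁ - x₂) ^ 2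
        + 3 * (x₁ * x₂ + x₁ * x₃ + x₂ * x₃) * (x₁ * x₂ * x₃) := by
    ring
  rw [key]
  positivity

lemma normalizedH_esymm_pos {z₁ z₂ z₃ y : ℝ} (h₁ : 0 < z₁) (h₂ : 0 < z₂) (h₃ : 0 < z₃)
    (hy : 0 < y) (hyz : y < z₁ + z₂ + z₃) :
    0 < normalizedH (z₁ + z₂ + z₃) (z₁ * z₂ + z₁ * z₃ + z₂ * z₃) (z₁ * z₂ * z₃) y :=
  normalizedH_pos (by positivity) (nine_mul_prod_le_sum_mul_esymm2 h₁.le h₂.le h₃.le)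
    (esymm_quintic_nonneg h₁.le h₂.le h₃.le) hy hyz

/-- For subextremal Kerr-de Sitter parameters, the function
`h(r) = 2μ(r)·(d/dr)(r·μ'(r) − 4μ(r)) − μ'(r)·(r·μ'(r) − 4μ(r))` is negative on `(r_e, r_c)`. -/
theorem stmt_0 (Λ m a : ℝ) (hΛ : 0 < Λ) (hm : 0 < m)
    (μ : ℝ → ℝ) (hμ : ∀ r, μ r = (r ^ 2 + a ^ 2) * (1 - Λ * r ^ 2 / 3) - 2 * m * r)
    (h : ℝ → ℝ)
    (hh : ∀ r, h r = 2 * μ r * deriv (fun s => s * deriv μ s - 4 * μ s) r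
      - deriv μ r * (r * deriv μ r - 4 * μ r))
    (rneg rC re rc : ℝ) (h1 : rneg < rC) (h2 : rC < re) (h3 : re < rc)
    (hr1 : μ rneg = 0) (hr2 : μ rC = 0) (hr3 : μ re = 0) (hr4 : μ rc = 0) :
    ∀ r ∈ Set.Ioo re rc, h r < 0 := by
  rintro r ⟨hre, hrc⟩
  have hμ' : ∀ s, μ s = -(Λ / 3) * s ^ 4 + 0 * s ^ 3 + (1 - Λ * a ^ 2 / 3) * s ^ 2 + (-2 * m) * s
      + a ^ 2 := fun s => by rw [hμ]; ring
  obtain ⟨hσ₁, hσ₂, hσ₃, hσ₄⟩ := quartic_coeffs_of_four_roots h1.ne (h1.trans h2).ne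
    (h1.trans (h2.trans h3)).ne h2.ne (h2.trans h3).ne h3.ne
    (hμ' rneg ▸ hr1) (hμ' rC ▸ hr2) (hμ' re ▸ hr3) (hμ' rc ▸ hr4)
  have hsum : rneg + rC + re + rc = 0 := by nlinarith
  have hre_pos : 0 < re := by
    by_contra! hre_nonpos
    have := esymm3_nonneg_of_sum_eq_zero hsum (by linarith) (by linarith) hre_nonpos
    nlinarith
  have hfac : ∀ s, μ s = -(Λ / 3) * ((s - rneg) * (s - rC) * (s - re) * (s - rc)) := fun s => by
    rw [hμ']
    linear_combination s ^ 2 * hσ₂ + s * hσ₃ + hσ₄ + s ^ 3 * hσ₁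
  rw [hh, h_eq_of_roots hsum hfac]
  exact mul_neg_of_neg_of_pos (neg_neg_of_pos (by positivity))
    (normalizedH_esymm_pos (by linarith) (by linarith) (by linarith) (by linarith) (by linarith))
end

section
/- Given a ∈ ℝ and m > 0, there exist real numbers Λ₀ ≤ Λ₁ such that for every Λ ≥ 0 the discriminant condition holds if and only if Λ₀ < Λ < Λ₁ (in particular, the set of Λ ≥ 0 satisfying the discriminant condition is an interval, possibly empty). -/
/-!
Expanded in `Λ`, the discriminant is a quartic whose coefficients of `Λ²`, `Λ³`, `Λ⁴` are all
`≤ 0`, so it is concave on `[0, ∞)` and its positivity set there is convex, i.e. an interval.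
That interval is relatively open by continuity, and bounded because the discriminant is at most
`10 - 9 m² Λ`.
-/

open Set

theorem IsOpen.exists_eq_Ioo_of_ordConnected {α : Type*} [ConditionallyCompleteLinearOrder α]
    [TopologicalSpace α] [OrderTopology α] [DenselyOrdered α] [NoMinOrder α] [NoMaxOrder α]
    [Nonempty α] {U : Set α} (hU : IsOpen U) (hc : U.OrdConnected) (hb : BddBelow U)
    (ha : BddAbove U) : ∃ a b, a ≤ b ∧ U = Ioo a b := by
  obtain rfl | hne := U.eq_empty_or_nonempty
  · obtain ⟨a⟩ := ‹Nonempty α›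
    exact ⟨a, a, le_rfl, Ioo_self a |>.symm⟩
  refine ⟨sInf U, sSup U, csInf_le_csSup hne hb ha, subset_antisymm ?_ ?_⟩
  · have := interior_mono (subset_Icc_csInf_csSup hb ha)
    rwa [hU.interior_eq, interior_Icc] at this
  · rintro x ⟨hlo, hhi⟩
    obtain ⟨y, hy, hyx⟩ := exists_lt_of_csInf_lt hne hlo
    obtain ⟨z, hz, hxz⟩ := exists_lt_of_lt_csSup hne hhi
    exact hc.out hy hz ⟨hyx.le, hxz.le⟩

theorem ConcaveOn.exists_Ioo_superlevel_Ici {f : ℝ → ℝ} (hf : ContinuousOn f (Ici 0))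
    (hconc : ConcaveOn ℝ (Ici 0) f) (hbdd : BddAbove {x ∈ Ici 0 | 0 < f x}) :
    ∃ a b, a ≤ b ∧ ∀ x, 0 ≤ x → (0 < f x ↔ a < x ∧ x < b) := by
  -- Extending `f` by `f 0` to the left makes the superlevel set, which is only relatively open
  -- in `[0, ∞)`, an open interval of `ℝ`.
  set U := Ioi (-1) ∩ (fun x => max x 0) ⁻¹' {x ∈ Ici 0 | 0 < f x}
  have hpre : (fun x => max x 0) ⁻¹' {x ∈ Ici 0 | 0 < f x} = {x | 0 < f (max x 0)} := by
    ext x; simp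
  have hopen : IsOpen U := by
    refine isOpen_Ioi.inter ?_
    rw [hpre]
    exact isOpen_lt continuous_const
      (hf.comp_continuous (continuous_id.max continuous_const) fun x => le_max_right x 0)
  have hc : U.OrdConnected :=
    ordConnected_Ioi.inter ((hconc.convex_gt 0).ordConnected.preimage_mono
      fun _ _ h => max_le_max_right 0 h)
  obtain ⟨M, hM⟩ := hbdd
  have hbddU : BddAbove U := ⟨M, fun x hx => (le_max_left x 0).trans (hM hx.2)⟩
  obtain ⟨a, b, hab, hU⟩ :=
    hopen.exists_eq_Ioo_of_ordConnected hc ⟨-1, fun x hx => le_of_lt hx.1⟩ hbddU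
  refine ⟨a, b, hab, fun x hx => ?_⟩
  rw [← mem_Ioo, ← hU]
  simp [U, hx, show (-1 : ℝ) < x by linarith]

theorem concaveOn_const_mul_pow {c : ℝ} (hc : c ≤ 0) (n : ℕ) :
    ConcaveOn ℝ (Ici 0) fun x : ℝ => c * x ^ n :=
  (((convexOn_pow n).smul (neg_nonneg.2 hc)).neg).congr fun x _ => by simp

theorem concaveOn_quartic {A B C D E : ℝ} (hC : C ≤ 0) (hD : D ≤ 0) (hE : E ≤ 0) :
    ConcaveOn ℝ (Ici 0) fun x : ℝ => A + B * x + C * x ^ 2 + D * x ^ 3 + E * x ^ 4 :=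
  ((((concaveOn_const A (convex_Ici 0)).add ((LinearMap.mul ℝ ℝ B).concaveOn (convex_Ici 0))).add
    (concaveOn_const_mul_pow hC 2)).add (concaveOn_const_mul_pow hD 3)).add
    (concaveOn_const_mul_pow hE 4)

noncomputable def discriminant (Λ a m : ℝ) : ℝ :=
  - (1 + Λ * a ^ 2 / 3) ^ 4 * (a / m) ^ 2 + 12 * (1 - Λ * a ^ 2 / 3) * Λ * a ^ 2
    + (1 - Λ * a ^ 2 / 3) ^ 3 - 9 * Λ * m ^ 2

theorem discriminant_eq (Λ a m : ℝ) :
    discriminant Λ a m = (1 - (a / m) ^ 2)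
      + (12 * a ^ 2 - (4 * (a / m) ^ 2 + 3) * (a ^ 2 / 3) - 9 * m ^ 2) * Λ
      + -((6 * (a / m) ^ 2 + 33) * (a ^ 2 / 3) ^ 2) * Λ ^ 2
      + -((4 * (a / m) ^ 2 + 1) * (a ^ 2 / 3) ^ 3) * Λ ^ 3
      + -((a / m) ^ 2 * (a ^ 2 / 3) ^ 4) * Λ ^ 4 := by
  unfold discriminant; ring

theorem concaveOn_discriminant (a m : ℝ) : ConcaveOn ℝ (Ici 0) fun Λ => discriminant Λ a m := by
  simp_rw [discriminant_eq]
  exact concaveOn_quartic (neg_nonpos.2 (by positivity)) (neg_nonpos.2 (by positivity))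
    (neg_nonpos.2 (by positivity))

theorem discriminant_le (a m : ℝ) {Λ : ℝ} (hΛ : 0 ≤ Λ) :
    discriminant Λ a m ≤ 10 - 9 * m ^ 2 * Λ := by
  -- With `t = Λ a² / 3` the other terms are `-(a / m)² (1 + t)⁴ + 36 t (1 - t) + (1 - t)³ ≤ 10`.
  have ht : 0 ≤ Λ * a ^ 2 / 3 := by positivity
  unfold discriminant
  nlinarith [sq_nonneg (2 * (Λ * a ^ 2 / 3) - 1),
    mul_nonneg (sq_nonneg (a / m)) (sq_nonneg ((1 + Λ * a ^ 2 / 3) ^ 2)),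
    mul_nonneg ht (sq_nonneg (Λ * a ^ 2 / 3 - 3 / 2))]

/-- Given `a` and `m > 0`, the set of `Λ ≥ 0` satisfying the discriminant
condition is of the form `(Λ₀, Λ₁)` for some `Λ₀ ≤ Λ₁`. -/
theorem stmt_4 (a m : ℝ) (hm : 0 < m) :
    ∃ Λ₀ Λ₁ : ℝ, Λ₀ ≤ Λ₁ ∧ ∀ Λ : ℝ, 0 ≤ Λ →
      (- (1 + Λ * a ^ 2 / 3) ^ 4 * (a / m) ^ 2 + 12 * (1 - Λ * a ^ 2 / 3) * Λ * a ^ 2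
        + (1 - Λ * a ^ 2 / 3) ^ 3 - 9 * Λ * m ^ 2 > 0 ↔ Λ₀ < Λ ∧ Λ < Λ₁) := by
  have hbdd : BddAbove {Λ ∈ Ici 0 | 0 < discriminant Λ a m} := by
    refine ⟨10 / (9 * m ^ 2), fun Λ ⟨hΛ, hpos⟩ => ?_⟩
    have := hpos.trans_le (discriminant_le a m hΛ)
    rw [le_div_iff₀ (by positivity)]
    linarith
  have hcont : Continuous fun Λ => discriminant Λ a m := by unfold discriminant; fun_prop
  exact (concaveOn_discriminant a m).exists_Ioo_superlevel_Ici hcont.continuousOn hbdd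
end

section
/- If Λ ≥ 0, m > 0 and the discriminant condition holds, then 8·(1 − Λa²/3)·a² < 9·m², i.e. a²/m² < (9/8)·1/(1 − Λa²/3). -/
/-!
With `u = Λa²/3`, clearing the denominators `a²m²` turns the discriminant condition into
`Q(a², m²) < 0` for the binary quadratic form `Q(x, y) = (1+u)⁴x² - ((1-u)³ + 36u(1-u))xy + 27uy²`,
whose discriminant is `(u² - 14u + 1)³`. If `u² - 14u + 1 ≤ 0` the form is nonnegative.
Otherwise `64(1-u)²Q` is a nonnegative combination of `s²`, `sy` and `y²` with
`s = 8(1-u)x - 9y`, so `Q ≥ 0` as soon as `s ≥ 0`; hence `Q < 0` forces `8(1-u)a² < 9m²`.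
-/

/-- The left-hand side of the discriminant condition. -/
noncomputable def disc (Λ m a : ℝ) : ℝ :=
  - (1 + Λ * a ^ 2 / 3) ^ 4 * (a / m) ^ 2 + 12 * (1 - Λ * a ^ 2 / 3) * Λ * a ^ 2
    + (1 - Λ * a ^ 2 / 3) ^ 3 - 9 * Λ * m ^ 2

/-- `-a²m² · disc Λ m a`, written in `u = Λa²/3`, `x = a²`, `y = m²`. -/
def discForm (u x y : ℝ) : ℝ :=
  (1 + u) ^ 4 * x ^ 2 - ((1 - u) ^ 3 + 36 * u * (1 - u)) * x * y + 27 * u * y ^ 2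

theorem disc_mul_eq_neg_discForm {Λ m a : ℝ} (ha : a ≠ 0) (hm : m ≠ 0) :
    disc Λ m a * (a ^ 2 * m ^ 2) = - discForm (Λ * a ^ 2 / 3) (a ^ 2) (m ^ 2) := by
  unfold disc discForm
  field_simp
  ring

theorem discForm_nonneg_of_nonpos {u : ℝ} (hk : u ^ 2 - 14 * u + 1 ≤ 0) (x y : ℝ) :
    0 ≤ discForm u x y := by
  have hA : 0 < 4 * (1 + u) ^ 4 := by
    have : 0 < 1 + u := by nlinarith
    positivity
  have hk3 : (u ^ 2 - 14 * u + 1) ^ 3 * y ^ 2 ≤ 0 :=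
    mul_nonpos_of_nonpos_of_nonneg (Odd.pow_nonpos ⟨1, rfl⟩ hk) (sq_nonneg y)
  have hsq : 4 * (1 + u) ^ 4 * discForm u x y
      = (2 * (1 + u) ^ 4 * x - ((1 - u) ^ 3 + 36 * u * (1 - u)) * y) ^ 2
        - (u ^ 2 - 14 * u + 1) ^ 3 * y ^ 2 := by
    unfold discForm; ring
  refine nonneg_of_mul_nonneg_right ?_ hA
  rw [hsq]
  nlinarith [sq_nonneg (2 * (1 + u) ^ 4 * x - ((1 - u) ^ 3 + 36 * u * (1 - u)) * y)]

theorem discForm_nonneg_of_pos {u x y : ℝ} (hu : 0 ≤ u) (hk : 0 < u ^ 2 - 14 * u + 1)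
    (hy : 0 ≤ y) (hs : 9 * y ≤ 8 * (1 - u) * x) : 0 ≤ discForm u x y := by
  set k := u ^ 2 - 14 * u + 1
  set s := 8 * (1 - u) * x - 9 * y
  have hu1 : 0 < 64 * (1 - u) ^ 2 := by
    have : 1 - u ≠ 0 := fun h => by nlinarith
    positivity
  have hexp : 64 * (1 - u) ^ 2 * discForm u x y
      = (1 + u) ^ 4 * s ^ 2 + (10 * k ^ 2 + 96 * k * u) * (s * y) + 9 * k ^ 2 * y ^ 2 := by
    unfold discForm; ring
  have hsy : 0 ≤ s * y := mul_nonneg (by linarith) hy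
  refine nonneg_of_mul_nonneg_right ?_ hu1
  rw [hexp]
  have : 0 ≤ 10 * k ^ 2 + 96 * k * u := by positivity
  positivity

theorem discForm_nonneg {u x y : ℝ} (hu : 0 ≤ u) (hy : 0 ≤ y) (hs : 9 * y ≤ 8 * (1 - u) * x) :
    0 ≤ discForm u x y := by
  rcases le_or_gt (u ^ 2 - 14 * u + 1) 0 with hk | hk
  · exact discForm_nonneg_of_nonpos hk x y
  · exact discForm_nonneg_of_pos hu hk hy hs

theorem one_sub_pos_of_disc_pos {Λ m a : ℝ} (hΛ : 0 ≤ Λ) (hm : 0 < m) (hd : 0 < disc Λ m a) :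
    0 < 1 - Λ * a ^ 2 / 3 := by
  by_contra! h
  have hΛ' : 0 < Λ := by
    rcases hΛ.lt_or_eq with hΛ' | rfl
    · exact hΛ'
    · norm_num at h
  have h' : 0 ≤ -(1 - Λ * a ^ 2 / 3) := by linarith
  unfold disc at hd
  nlinarith [mul_nonneg (sq_nonneg ((1 + Λ * a ^ 2 / 3) ^ 2)) (sq_nonneg (a / m)),
    mul_nonneg (mul_nonneg h' hΛ) (sq_nonneg a), pow_nonneg h' 3, mul_pos hΛ' (mul_pos hm hm)]

theorem lt_of_disc_pos {Λ m a : ℝ} (hΛ : 0 ≤ Λ) (hm : 0 < m) (hd : 0 < disc Λ m a) :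
    8 * (1 - Λ * a ^ 2 / 3) * a ^ 2 < 9 * m ^ 2 := by
  by_contra! hs
  have ha : a ≠ 0 := by
    rintro rfl
    nlinarith
  have hQ := discForm_nonneg (by positivity) (sq_nonneg m) hs
  have := disc_mul_eq_neg_discForm (Λ := Λ) ha hm.ne'
  nlinarith [mul_pos hd (by positivity : 0 < a ^ 2 * m ^ 2)]

/-- If `Λ ≥ 0`, `m > 0` and the discriminant condition holds, then
`8(1 − Λa²/3)a² < 9m²`, i.e. `a²/m² < (9/8)/(1 − Λa²/3)`. -/
theorem stmt_5 (Λ m a : ℝ) (hΛ : 0 ≤ Λ) (hm : 0 < m)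
    (hdisc : - (1 + Λ * a ^ 2 / 3) ^ 4 * (a / m) ^ 2 + 12 * (1 - Λ * a ^ 2 / 3) * Λ * a ^ 2
      + (1 - Λ * a ^ 2 / 3) ^ 3 - 9 * Λ * m ^ 2 > 0) :
    8 * (1 - Λ * a ^ 2 / 3) * a ^ 2 < 9 * m ^ 2 ∧
      a ^ 2 / m ^ 2 < (9 / 8) * (1 / (1 - Λ * a ^ 2 / 3)) := by
  have hd : 0 < disc Λ m a := hdisc
  have hu := one_sub_pos_of_disc_pos hΛ hm hd
  have main := lt_of_disc_pos hΛ hm hd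
  refine ⟨main, ?_⟩
  rw [div_lt_iff₀ (by positivity), mul_one_div, div_mul_eq_mul_div, lt_div_iff₀ hu]
  linarith
end

section
/- If Λ ≥ 0, m > 0 and the discriminant condition holds, then 1 − Λa²/3 > 0. -/
theorem stmt_7_general (Λ m a : ℝ) (hΛ : 0 ≤ Λ)
    (hdisc : - (1 + Λ * a ^ 2 / 3) ^ 4 * (a / m) ^ 2 + 12 * (1 - Λ * a ^ 2 / 3) * Λ * a ^ 2
      + (1 - Λ * a ^ 2 / 3) ^ 3 - 9 * Λ * m ^ 2 > 0) :
    0 < 1 - Λ * a ^ 2 / 3 := by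
  by_contra! h
  have hquartic : 0 ≤ (1 + Λ * a ^ 2 / 3) ^ 4 * (a / m) ^ 2 := by positivity
  have hcross : 12 * (1 - Λ * a ^ 2 / 3) * Λ * a ^ 2 ≤ 0 := by
    have : 0 ≤ Λ * a ^ 2 := by positivity
    nlinarith
  have hcube : (1 - Λ * a ^ 2 / 3) ^ 3 ≤ 0 := Odd.pow_nonpos (by decide) h
  have hmass : 0 ≤ 9 * Λ * m ^ 2 := by positivity
  linarith

/-- If `Λ ≥ 0`, `m > 0` and the discriminant condition holds, then `1 − Λa²/3 > 0`. -/
theorem stmt_7 (Λ m a : ℝ) (hΛ : 0 ≤ Λ) (hm : 0 < m)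
    (hdisc : - (1 + Λ * a ^ 2 / 3) ^ 4 * (a / m) ^ 2 + 12 * (1 - Λ * a ^ 2 / 3) * Λ * a ^ 2
      + (1 - Λ * a ^ 2 / 3) ^ 3 - 9 * Λ * m ^ 2 > 0) :
    0 < 1 - Λ * a ^ 2 / 3 :=
  stmt_7_general Λ m a hΛ hdisc
end

section
/- If Λ > 0, m > 0 and 1 − Λa²/3 > 0, then μ'(r) < 0 for all r ∈ [0, m/(1 − Λa²/3)]. -/
/-! Expanding, `μ'(r) = 2 (r (1 - Λa²/3) - m) - 4Λr³/3`. On the interval the first term is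
nonpositive because `r (1 - Λa²/3) ≤ m`, and the second is negative for `r > 0`; at `r = 0`
the derivative is `-2m`. -/

theorem hasDerivAt_quartic (Λ m a r : ℝ) :
    HasDerivAt (fun r => (r ^ 2 + a ^ 2) * (1 - Λ * r ^ 2 / 3) - 2 * m * r)
      (2 * (r * (1 - Λ * a ^ 2 / 3) - m) - 4 * Λ * r ^ 3 / 3) r := by
  have h₁ : HasDerivAt (fun r : ℝ => r ^ 2 + a ^ 2) (2 * r) r := by
    simpa using (hasDerivAt_pow 2 r).add_const (a ^ 2)
  have h₂ : HasDerivAt (fun r : ℝ => 1 - Λ * r ^ 2 / 3) (-(Λ * (2 * r) / 3)) r := by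
    simpa using (((hasDerivAt_pow 2 r).const_mul Λ).div_const 3).const_sub 1
  have h₃ : HasDerivAt (fun r : ℝ => 2 * m * r) (2 * m) r := by
    simpa using (hasDerivAt_id r).const_mul (2 * m)
  exact ((h₁.mul h₂).sub h₃).congr_deriv (by ring)

theorem quartic_deriv_neg {Λ m b r : ℝ} (hΛ : 0 < Λ) (hm : 0 < m) (hr : 0 ≤ r)
    (hrb : r * b ≤ m) : 2 * (r * b - m) - 4 * Λ * r ^ 3 / 3 < 0 := by
  rcases hr.eq_or_lt with rfl | hr
  · linarith
  · nlinarith [mul_pos hΛ (pow_pos hr 3)]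

/-- If `Λ > 0`, `m > 0` and `1 − Λa²/3 > 0`, then `μ'(r) < 0` for all
`r ∈ [0, m/(1 − Λa²/3)]`. -/
theorem stmt_10 (Λ m a : ℝ) (hΛ : 0 < Λ) (hm : 0 < m) (hb : 0 < 1 - Λ * a ^ 2 / 3)
    (μ : ℝ → ℝ) (hμ : ∀ r, μ r = (r ^ 2 + a ^ 2) * (1 - Λ * r ^ 2 / 3) - 2 * m * r) :
    ∀ r ∈ Set.Icc (0 : ℝ) (m / (1 - Λ * a ^ 2 / 3)), deriv μ r < 0 := by
  rintro r ⟨hr₀, hr₁⟩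
  obtain rfl : μ = _ := funext hμ
  rw [(hasDerivAt_quartic Λ m a r).deriv]
  exact quartic_deriv_neg hΛ hm hr₀ ((le_div_iff₀ hb).mp hr₁)
end

section
/- The function G(r) := (r₀² − r²)²/μ(r) on (r_e, r_c) satisfies G'(r) < 0 for all r ∈ (r_e, r₀) and G'(r) > 0 for all r ∈ (r₀, r_c); in particular G has a strict global minimum at r₀. -/
/-!
Since `μ` has leading coefficient `-Λ/3` and the four roots `rneg < rC < re < rc`,
`μ = -(Λ/3) ∏ (r - rᵢ)`, so on `(re, rc)` its logarithmic derivative `L = μ'/μ = ∑ 1/(r - rᵢ)` is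
strictly decreasing; as `L r₀ = 0`, `L` has the sign of `r₀ - r`. Differentiating,
`G' = -(r₀² - r²)(4r + (r₀² - r²) L)/μ`. Vieta (`∑ rᵢ = 0`, `Λ e₃ = -6m < 0`) gives `re > 0`, so
`r₀² - r²` also has the sign of `r₀ - r`; hence `4r + (r₀² - r²) L > 0` and `G'` has the sign of
`r - r₀`.
-/

open Set Polynomial

theorem Cubic.eq_zero_of_eval_eq_zero {R : Type*} [CommRing R] [IsDomain R] {P : Cubic R}
    {x : Fin 4 → R} (hx : Function.Injective x) (h : ∀ i, P.toPoly.eval (x i) = 0) : P = 0 :=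
  (P.toPoly_eq_zero_iff).mp <|
    eq_zero_of_natDegree_lt_card_of_eval_eq_zero _ hx h (natDegree_cubic_le.trans_lt (by simp))

theorem logDeriv_prod_sub {𝕜 : Type*} [NontriviallyNormedField 𝕜] {ι : Type*} {s : Finset ι}
    {x : ι → 𝕜} {r : 𝕜} (hr : ∀ i ∈ s, r ≠ x i) :
    logDeriv (fun z ↦ ∏ i ∈ s, (z - x i)) r = ∑ i ∈ s, (r - x i)⁻¹ := by
  rw [logDeriv_prod (fun i hi ↦ sub_ne_zero.mpr (hr i hi)) (fun i _ ↦ by fun_prop)]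
  refine Finset.sum_congr rfl fun i _ ↦ ?_
  simp [logDeriv_apply]

theorem strictAntiOn_sum_inv_sub {ι : Type*} {s : Finset ι} (hs : s.Nonempty) {x : ι → ℝ}
    {I : Set ℝ} (hI : I.OrdConnected) (hx : ∀ i ∈ s, x i ∉ I) :
    StrictAntiOn (fun r ↦ ∑ i ∈ s, (r - x i)⁻¹) I := by
  intro r hr r' hr' hlt
  refine Finset.sum_lt_sum_of_nonempty hs fun i hi ↦ ?_
  have hxi : x i < r ∨ r' < x i := by
    by_contra! h
    exact hx i hi (hI.out hr hr' h)
  rcases hxi with hxi | hxi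
  · exact (inv_lt_inv₀ (by linarith) (by linarith)).mpr (by linarith)
  · exact (inv_lt_inv_of_neg (by linarith) (by linarith)).mpr (by linarith)

theorem hasDerivAt_sub_sq_sq_div {𝕜 : Type*} [NontriviallyNormedField 𝕜] {f : 𝕜 → 𝕜} {c r : 𝕜}
    (hf : DifferentiableAt 𝕜 f r) (hr : f r ≠ 0) :
    HasDerivAt (fun z ↦ (c - z ^ 2) ^ 2 / f z)
      (-(c - r ^ 2) * (4 * r + (c - r ^ 2) * logDeriv f r) / f r) r := by
  refine (((hasDerivAt_pow 2 r).const_sub c).fun_pow 2).fun_div hf.hasDerivAt hr |>.congr_deriv ?_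
  rw [logDeriv_apply]
  field_simp
  ring

namespace KerrDeSitter

noncomputable def mu (Λ m a r : ℝ) : ℝ := (r ^ 2 + a ^ 2) * (1 - Λ * r ^ 2 / 3) - 2 * m * r

theorem differentiable_mu (Λ m a : ℝ) : Differentiable ℝ (mu Λ m a) := by
  unfold mu
  fun_prop

structure OrderedRoots (Λ m a rneg rC re rc : ℝ) : Prop where
  lt_rC : rneg < rC
  lt_re : rC < re
  lt_rc : re < rc
  mu_rneg : mu Λ m a rneg = 0
  mu_rC : mu Λ m a rC = 0
  mu_re : mu Λ m a re = 0
  mu_rc : mu Λ m a rc = 0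

/-- The quartic terms cancel in `μ(r) + (Λ/3)(r - rneg)(r - rC)(r - re)(r - rc)`; this is the
cubic that is left. -/
noncomputable def muRemainder (Λ m a rneg rC re rc : ℝ) : Cubic ℝ where
  a := -(Λ / 3) * (rneg + rC + re + rc)
  b := 1 - Λ * a ^ 2 / 3 + Λ / 3 * (rneg * rC + rneg * re + rneg * rc + rC * re + rC * rc + re * rc)
  c := -(2 * m) - Λ / 3 * (rneg * rC * re + rneg * rC * rc + rneg * re * rc + rC * re * rc)
  d := a ^ 2 + Λ / 3 * (rneg * rC * re * rc)

theorem eval_muRemainder (Λ m a rneg rC re rc r : ℝ) :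
    (muRemainder Λ m a rneg rC re rc).toPoly.eval r =
      mu Λ m a r + Λ / 3 * ((r - rneg) * (r - rC) * (r - re) * (r - rc)) := by
  simp only [muRemainder, Cubic.toPoly, eval_add, eval_mul, eval_C, eval_pow, eval_X, mu]
  ring

namespace OrderedRoots

variable {Λ m a rneg rC re rc : ℝ}

theorem muRemainder_eq_zero (h : OrderedRoots Λ m a rneg rC re rc) :
    muRemainder Λ m a rneg rC re rc = 0 := by
  have hmono : StrictMono ![rneg, rC, re, rc] := by
    refine Fin.strictMono_iff_lt_succ.mpr fun i ↦ ?_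
    fin_cases i
    exacts [h.lt_rC, h.lt_re, h.lt_rc]
  refine Cubic.eq_zero_of_eval_eq_zero hmono.injective fun i ↦ ?_
  fin_cases i <;> simp [eval_muRemainder, h.mu_rneg, h.mu_rC, h.mu_re, h.mu_rc]

theorem mu_eq (h : OrderedRoots Λ m a rneg rC re rc) (r : ℝ) :
    mu Λ m a r = -(Λ / 3) * ∏ i, (r - ![rneg, rC, re, rc] i) := by
  have hr := eval_muRemainder Λ m a rneg rC re rc r
  rw [h.muRemainder_eq_zero] at hr
  simp only [Cubic.zero, eval_zero] at hr
  simp only [Fin.prod_univ_four, Matrix.cons_val]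
  linear_combination -hr

theorem sum_eq_zero (h : OrderedRoots Λ m a rneg rC re rc) (hΛ : Λ ≠ 0) :
    rneg + rC + re + rc = 0 := by
  have hcoeff : (muRemainder Λ m a rneg rC re rc).a = 0 := by rw [h.muRemainder_eq_zero]; rfl
  dsimp only [muRemainder] at hcoeff
  exact (mul_eq_zero.mp hcoeff).resolve_left (by simpa using hΛ)

theorem mul_esymm_three_eq (h : OrderedRoots Λ m a rneg rC re rc) :
    Λ * (rneg * rC * re + rneg * rC * rc + rneg * re * rc + rC * re * rc) = -(6 * m) := by
  have hcoeff : (muRemainder Λ m a rneg rC re rc).c = 0 := by rw [h.muRemainder_eq_zero]; rfl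
  dsimp only [muRemainder] at hcoeff
  linear_combination -3 * hcoeff

theorem re_pos (h : OrderedRoots Λ m a rneg rC re rc) (hΛ : 0 < Λ) (hm : 0 < m) : 0 < re := by
  have hsum := h.sum_eq_zero hΛ.ne'
  have he₃ := h.mul_esymm_three_eq
  by_contra! hre
  -- with `e₁ = 0`, `e₃` factors, and both factors would be positive if `re ≤ 0`
  have hfac : rneg * rC * re + rneg * rC * rc + rneg * re * rc + rC * re * rc
      = (re + rc) * (rneg * rC - re * rc) := by linear_combination (re * rc) * hsum
  have hpos : 0 < (re + rc) * (rneg * rC - re * rc) := by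
    have := h.lt_rC; have := h.lt_re; have := h.lt_rc
    refine mul_pos (by linarith) ?_
    nlinarith
  nlinarith

theorem mu_pos (h : OrderedRoots Λ m a rneg rC re rc) (hΛ : 0 < Λ) {r : ℝ} (hr : r ∈ Ioo re rc) :
    0 < mu Λ m a r := by
  obtain ⟨hre, hrc⟩ := hr
  have := h.lt_rC; have := h.lt_re
  have hprod : (r - rneg) * (r - rC) * (r - re) * (r - rc) < 0 :=
    mul_neg_of_pos_of_neg (mul_pos (mul_pos (by linarith) (by linarith)) (by linarith))
      (by linarith)
  rw [h.mu_eq, Fin.prod_univ_four]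
  exact mul_pos_of_neg_of_neg (by linarith) hprod

theorem notMem_Ioo (h : OrderedRoots Λ m a rneg rC re rc) (i : Fin 4) :
    ![rneg, rC, re, rc] i ∉ Ioo re rc := by
  have := h.lt_rC; have := h.lt_re
  fin_cases i <;> simp <;> intros <;> linarith

theorem logDeriv_mu (h : OrderedRoots Λ m a rneg rC re rc) (hΛ : Λ ≠ 0) {r : ℝ}
    (hr : r ∈ Ioo re rc) : logDeriv (mu Λ m a) r = ∑ i, (r - ![rneg, rC, re, rc] i)⁻¹ := by
  have hmu : mu Λ m a = fun z ↦ -(Λ / 3) * ∏ i, (z - ![rneg, rC, re, rc] i) := funext h.mu_eq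
  rw [hmu, logDeriv_const_mul _ _ (by simpa using hΛ), logDeriv_prod_sub]
  exact fun i _ hri ↦ h.notMem_Ioo i (hri ▸ hr)

theorem strictAntiOn_logDeriv_mu (h : OrderedRoots Λ m a rneg rC re rc) (hΛ : Λ ≠ 0) :
    StrictAntiOn (logDeriv (mu Λ m a)) (Ioo re rc) := by
  refine (strictAntiOn_sum_inv_sub Finset.univ_nonempty ordConnected_Ioo ?_).congr
    fun r hr ↦ (h.logDeriv_mu hΛ hr).symm
  exact fun i _ ↦ h.notMem_Ioo i

end OrderedRoots

end KerrDeSitter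

open KerrDeSitter

/-- The function `G(r) = (r₀² − r²)²/μ(r)` satisfies `G' < 0` on `(r_e, r₀)`
and `G' > 0` on `(r₀, r_c)`; in particular `G` has a strict global minimum at `r₀`. -/
theorem stmt_12 (Λ m a : ℝ) (hΛ : 0 < Λ) (hm : 0 < m)
    (μ : ℝ → ℝ) (hμ : ∀ r, μ r = (r ^ 2 + a ^ 2) * (1 - Λ * r ^ 2 / 3) - 2 * m * r)
    (rneg rC re rc : ℝ) (h1 : rneg < rC) (h2 : rC < re) (h3 : re < rc)
    (hr1 : μ rneg = 0) (hr2 : μ rC = 0) (hr3 : μ re = 0) (hr4 : μ rc = 0)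
    (r₀ : ℝ) (hr₀ : r₀ ∈ Set.Ioo re rc) (hcrit : deriv μ r₀ = 0)
    (G : ℝ → ℝ) (hG : ∀ r, G r = (r₀ ^ 2 - r ^ 2) ^ 2 / μ r) :
    (∀ r ∈ Set.Ioo re r₀, deriv G r < 0) ∧
    (∀ r ∈ Set.Ioo r₀ rc, 0 < deriv G r) ∧
    (∀ r ∈ Set.Ioo re rc, r ≠ r₀ → G r₀ < G r) := by
  obtain rfl : μ = mu Λ m a := funext hμ
  obtain rfl : G = fun r ↦ (r₀ ^ 2 - r ^ 2) ^ 2 / mu Λ m a r := funext hG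
  have h : OrderedRoots Λ m a rneg rC re rc := ⟨h1, h2, h3, hr1, hr2, hr3, hr4⟩
  set L := logDeriv (mu Λ m a)
  have hL₀ : L r₀ = 0 := by simp only [L, logDeriv_apply, hcrit, zero_div]
  have hG' (r : ℝ) (hr : r ∈ Ioo re rc) : deriv (fun r ↦ (r₀ ^ 2 - r ^ 2) ^ 2 / mu Λ m a r) r =
      -(r₀ ^ 2 - r ^ 2) * (4 * r + (r₀ ^ 2 - r ^ 2) * L r) / mu Λ m a r :=
    (hasDerivAt_sub_sq_sq_div (differentiable_mu Λ m a r) (h.mu_pos hΛ hr).ne').deriv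
  have hpos (r : ℝ) (hr : r ∈ Ioo re rc) : 0 < r := (h.re_pos hΛ hm).trans hr.1
  refine ⟨fun r hr ↦ ?_, fun r hr ↦ ?_, fun r hr hne ↦ ?_⟩
  · have hrI : r ∈ Ioo re rc := ⟨hr.1, hr.2.trans hr₀.2⟩
    have hL : 0 < L r := hL₀ ▸ h.strictAntiOn_logDeriv_mu hΛ.ne' hrI hr₀ hr.2
    have hc : 0 < r₀ ^ 2 - r ^ 2 := by nlinarith [hpos r hrI, hr.2]
    rw [hG' r hrI]
    refine div_neg_of_neg_of_pos (mul_neg_of_neg_of_pos (neg_neg_of_pos hc) ?_) (h.mu_pos hΛ hrI)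
    nlinarith [hpos r hrI, mul_pos hc hL]
  · have hrI : r ∈ Ioo re rc := ⟨hr₀.1.trans hr.1, hr.2⟩
    have hL : L r < 0 := hL₀ ▸ h.strictAntiOn_logDeriv_mu hΛ.ne' hr₀ hrI hr.1
    have hc : r₀ ^ 2 - r ^ 2 < 0 := by nlinarith [hpos r₀ hr₀, hr.1]
    rw [hG' r hrI]
    refine div_pos (mul_pos (neg_pos.mpr hc) ?_) (h.mu_pos hΛ hrI)
    nlinarith [hpos r hrI, mul_pos_of_neg_of_neg hc hL]
  · have hc : r₀ ^ 2 - r ^ 2 ≠ 0 := fun hc ↦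
      hne ((sq_eq_sq₀ (hpos r hr).le (hpos r₀ hr₀).le).mp (by linarith))
    beta_reduce
    rw [sub_self, zero_pow two_ne_zero, zero_div]
    exact div_pos (sq_pos_of_ne_zero hc) (h.mu_pos hΛ hr)
end

section
/- If m > 0, a ≠ 0, Λ ≥ 0, 1 − Λa²/3 > 0 and 8·(1 − Λa²/3)·a² < 9·m², then for all r with 0 < r ≤ 4a²/(3m) one has 4m·r⁴ − (8/3)·a²·(1 + Λa²/3)·r³ − 4m·a²·r² < 0. (This expression is the derivative of h(r) with respect to Λ, so h decreases with increasing Λ on this range of r.) -/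
/-!
Factor the quartic as `r² · q(r)` with `q(r) = 4m r² − (8/3)a²(1 + Λa²/3) r − 4ma²`. The quadratic
`q` is convex, `q(0) = −4ma² ≤ 0`, and at `R = 4a²/(3m)` one computes
`q(R) = (4a²/(9m)) · (8(1 − Λa²/3)a² − 9m²) < 0`, so `q < 0` on `(0, R]`.
-/

theorem quadratic_neg_of_nonpos_of_neg {A B C R r : ℝ} (hA : 0 ≤ A) (h₀ : C ≤ 0)
    (hR : A * R ^ 2 + B * R + C < 0) (hr : 0 < r) (hrR : r ≤ R) :
    A * r ^ 2 + B * r + C < 0 := by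
  have hR₀ : 0 < R := hr.trans_le hrR
  -- `q(r)` lies below the chord of `q` over `[0, R]`
  have interpolate : R * (A * r ^ 2 + B * r + C)
      = r * (A * R ^ 2 + B * R + C) + (R - r) * C + A * R * (r * (r - R)) := by ring
  have : R * (A * r ^ 2 + B * r + C) < 0 := by
    rw [interpolate]
    have h₁ : r * (A * R ^ 2 + B * R + C) < 0 := mul_neg_of_pos_of_neg hr hR
    have h₂ : (R - r) * C ≤ 0 := mul_nonpos_of_nonneg_of_nonpos (sub_nonneg.2 hrR) h₀
    have h₃ : A * R * (r * (r - R)) ≤ 0 :=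
      mul_nonpos_of_nonneg_of_nonpos (by positivity)
        (mul_nonpos_of_nonneg_of_nonpos hr.le (sub_nonpos.2 hrR))
    linarith
  exact neg_of_mul_neg_right this hR₀.le

theorem stmt_18_general (Λ m a : ℝ) (hm : 0 < m) (ha : a ≠ 0)
    (hmax : 8 * (1 - Λ * a ^ 2 / 3) * a ^ 2 < 9 * m ^ 2) :
    ∀ r : ℝ, 0 < r → r ≤ 4 * a ^ 2 / (3 * m) →
      4 * m * r ^ 4 - (8 / 3) * a ^ 2 * (1 + Λ * a ^ 2 / 3) * r ^ 3
        - 4 * m * a ^ 2 * r ^ 2 < 0 := by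
  intro r hr hrR
  set R := 4 * a ^ 2 / (3 * m)
  set B := -((8 / 3) * a ^ 2 * (1 + Λ * a ^ 2 / 3))
  have hqR : 4 * m * R ^ 2 + B * R + -(4 * m * a ^ 2) < 0 := by
    have hvalue : 4 * m * R ^ 2 + B * R + -(4 * m * a ^ 2)
        = 4 * a ^ 2 / (9 * m) * (8 * (1 - Λ * a ^ 2 / 3) * a ^ 2 - 9 * m ^ 2) := by
      simp only [R, B]
      field_simp
      ring
    rw [hvalue]
    exact mul_neg_of_pos_of_neg (by positivity) (sub_neg.2 hmax)
  have hq : 4 * m * r ^ 2 + B * r + -(4 * m * a ^ 2) < 0 :=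
    quadratic_neg_of_nonpos_of_neg (by positivity) (neg_nonpos.2 (by positivity)) hqR hr hrR
  calc 4 * m * r ^ 4 - (8 / 3) * a ^ 2 * (1 + Λ * a ^ 2 / 3) * r ^ 3 - 4 * m * a ^ 2 * r ^ 2
      = r ^ 2 * (4 * m * r ^ 2 + B * r + -(4 * m * a ^ 2)) := by ring
    _ < 0 := mul_neg_of_pos_of_neg (by positivity) hq

/-- If `m > 0`, `a ≠ 0`, `Λ ≥ 0`, `1 − Λa²/3 > 0` and `8(1 − Λa²/3)a² < 9m²`,
then for all `0 < r ≤ 4a²/(3m)` one has `4m·r⁴ − (8/3)a²(1 + Λa²/3)·r³ − 4ma²·r² < 0`. -/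
theorem stmt_18 (Λ m a : ℝ) (hm : 0 < m) (ha : a ≠ 0) (hΛ : 0 ≤ Λ)
    (hb : 0 < 1 - Λ * a ^ 2 / 3) (hmax : 8 * (1 - Λ * a ^ 2 / 3) * a ^ 2 < 9 * m ^ 2) :
    ∀ r : ℝ, 0 < r → r ≤ 4 * a ^ 2 / (3 * m) →
      4 * m * r ^ 4 - (8 / 3) * a ^ 2 * (1 + Λ * a ^ 2 / 3) * r ^ 3
        - 4 * m * a ^ 2 * r ^ 2 < 0 :=
  stmt_18_general Λ m a hm ha hmax
end
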